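/- arXiv:2505.04828 — 5 statements merged into one kernel-verified Lean document; each statement's English description precedes it below -/
import Mathlib

section
/- The normalization constant of the complex Ginibre eigenvalue density satisfies (1/π^N)∫_{ℂ^N} exp(−∑_{k=1}^N |z_k|²) ∏_{1≤i<j≤N}|z_i−z_j|² d²z₁⋯d²z_N = ∏_{k=1}^N Γ(k+1). -/
/-!
Write the squared Vandermonde product as `det V · conj (det V)`, absorbing the Gaussian weight
into the rows of the first factor. Andreief's identity turns the `N`-fold integral of a product of
two such determinants into `N!` times the determinant of the Gram matrix
`∫ e^{-|z|²} z^a conj(z)^b d²z`. Rotation invariance of the weight makes this matrix diagonal, with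
entries `π a!`, so the integral is `π^N · N! · ∏_{a<N} a! = π^N ∏_{k=1}^N k!`.
-/

open MeasureTheory Real Finset Matrix Equiv
open scoped Nat ComplexConjugate

section Leibniz

variable {ι R : Type*} [Fintype ι] [DecidableEq ι] [CommRing R]

theorem Matrix.det_eq_sum_sign_mul_prod_apply (M : Matrix ι ι R) :
    M.det = ∑ σ : Perm ι, (Perm.sign σ : R) * ∏ i, M i (σ i) := by
  rw [← det_transpose, det_apply']
  rfl

theorem Matrix.sum_sign_mul_prod_apply_perm (G : Matrix ι ι R) (σ : Perm ι) :
    ∑ τ : Perm ι, (Perm.sign τ : R) * ∏ i, G (σ i) (τ i) = Perm.sign σ * G.det := by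
  rw [← det_permute, det_eq_sum_sign_mul_prod_apply]
  rfl

end Leibniz

theorem integral_det_mul_det_eq_factorial_mul_det {ι α 𝕜 : Type*} [Fintype ι] [DecidableEq ι]
    [MeasurableSpace α] [RCLike 𝕜] (μ : Measure α) [SigmaFinite μ] (f g : ι → α → 𝕜)
    (hfg : ∀ a b, Integrable (fun x => f a x * g b x) μ) :
    ∫ z : ι → α, (of fun i j => f j (z i)).det * (of fun i j => g j (z i)).det
        ∂(Measure.pi fun _ => μ) =
      ((Fintype.card ι)! : 𝕜) * (of fun a b => ∫ x, f a x * g b x ∂μ).det := by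
  set G : Matrix ι ι 𝕜 := of fun a b => ∫ x, f a x * g b x ∂μ
  have hexpand : ∀ z : ι → α, (of fun i j => f j (z i)).det * (of fun i j => g j (z i)).det =
      ∑ σ : Perm ι, ∑ τ : Perm ι, (Perm.sign σ * Perm.sign τ : 𝕜) *
        ∏ i, f (σ i) (z i) * g (τ i) (z i) := fun z => by
    simp only [det_eq_sum_sign_mul_prod_apply, of_apply, sum_mul_sum, prod_mul_distrib]
    exact sum_congr rfl fun σ _ => sum_congr rfl fun τ _ => by ring
  have hterm : ∀ σ τ : Perm ι, Integrable (fun z : ι → α => (Perm.sign σ * Perm.sign τ : 𝕜) *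
      ∏ i, f (σ i) (z i) * g (τ i) (z i)) (Measure.pi fun _ => μ) := fun σ τ =>
    (Integrable.fintype_prod_dep fun i => hfg (σ i) (τ i)).const_mul _
  have hsign : ∀ σ : Perm ι, (Perm.sign σ : 𝕜) * Perm.sign σ = 1 := fun σ => by
    rw [← Int.cast_mul, ← Units.val_mul, Int.units_mul_self, Units.val_one, Int.cast_one]
  simp_rw [hexpand]
  rw [integral_finsetSum _ fun σ _ => integrable_finsetSum _ fun τ _ => hterm σ τ]
  calc ∑ σ : Perm ι, ∫ z, ∑ τ : Perm ι, (Perm.sign σ * Perm.sign τ : 𝕜) *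
          ∏ i, f (σ i) (z i) * g (τ i) (z i) ∂(Measure.pi fun _ => μ)
      = ∑ σ : Perm ι, ∑ τ : Perm ι, (Perm.sign σ * Perm.sign τ : 𝕜) * ∏ i, G (σ i) (τ i) := by
        refine sum_congr rfl fun σ _ => ?_
        rw [integral_finsetSum _ fun τ _ => hterm σ τ]
        refine sum_congr rfl fun τ _ => ?_
        rw [integral_const_mul, integral_fintype_prod_eq_prod (fun i x => f (σ i) x * g (τ i) x)]
        rfl
    _ = ∑ σ : Perm ι, (Perm.sign σ : 𝕜) * (Perm.sign σ * G.det) := by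
        simp_rw [mul_assoc, ← mul_sum, sum_sign_mul_prod_apply_perm]
    _ = (Fintype.card ι)! * G.det := by
        simp_rw [← mul_assoc, hsign, one_mul, sum_const, card_univ, Fintype.card_perm, nsmul_eq_mul]

theorem prod_lt_norm_sub_sq_eq_norm_det_vandermonde_sq {K : Type*} [NormedField K] {n : ℕ}
    (z : Fin n → K) :
    ∏ p ∈ univ.filter (fun p : Fin n × Fin n => p.1 < p.2), ‖z p.1 - z p.2‖ ^ 2 =
      ‖(vandermonde z).det‖ ^ 2 := by
  rw [det_vandermonde, prod_filter, Fintype.prod_prod_type, norm_prod, ← prod_pow]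
  refine prod_congr rfl fun i _ => ?_
  rw [norm_prod, ← prod_pow, ← filter_lt_eq_Ioi, prod_filter]
  simp only [norm_sub_rev]

theorem integral_eq_zero_of_comp_mul_eq_smul {E : Type*} [NormedAddCommGroup E] [NormedSpace ℂ E]
    {f : ℂ → E} {u : Circle} {w : ℂ} (hw : w ≠ 1) (hf : ∀ z, f (u * z) = w • f z) :
    ∫ z, f z = 0 := by
  have hfix : ∫ z, f z = w • ∫ z, f z := calc
    ∫ z, f z = ∫ z, f (rotation u z) := (integral_comp (rotation u) f).symm
    _ = ∫ z, w • f z := by simp only [rotation_apply, hf]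
    _ = w • ∫ z, f z := integral_smul w f
  have hkill : (1 - w) • ∫ z, f z = 0 := by rw [sub_smul, one_smul, ← hfix, sub_self]
  exact (smul_eq_zero.mp hkill).resolve_left (sub_ne_zero.mpr hw.symm)

theorem integral_norm_pow_mul_exp_neg_norm_sq (n : ℕ) :
    ∫ z : ℂ, ‖z‖ ^ n * rexp (-‖z‖ ^ 2) = π * Real.Gamma (n / 2 + 1) := by
  have h := Complex.integral_rpow_mul_exp_neg_rpow (p := 2) (q := n) one_le_two
    (by linarith [n.cast_nonneg (α := ℝ)])
  simp only [Real.rpow_natCast, Real.rpow_two] at h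
  rw [h, add_div, div_self two_ne_zero]
  ring

theorem integrable_norm_pow_mul_exp_neg_norm_sq (n : ℕ) :
    Integrable fun z : ℂ => ‖z‖ ^ n * rexp (-‖z‖ ^ 2) :=
  .of_integral_ne_zero <| by
    rw [integral_norm_pow_mul_exp_neg_norm_sq]
    exact (mul_pos pi_pos (Real.Gamma_pos_of_pos (by positivity))).ne'

theorem integrable_exp_neg_norm_sq_mul_pow_mul_conj_pow (a b : ℕ) :
    Integrable fun z : ℂ => (rexp (-‖z‖ ^ 2) : ℂ) * z ^ a * conj z ^ b := by
  refine (integrable_norm_pow_mul_exp_neg_norm_sq (a + b)).mono' (by fun_prop) ?_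
  filter_upwards with z
  simp only [norm_mul, norm_pow, Complex.norm_conj, Complex.norm_real,
    Real.norm_of_nonneg (exp_pos _).le, pow_add]
  exact le_of_eq (by ring)

theorem integral_exp_neg_norm_sq_mul_pow_mul_conj_pow_self (a : ℕ) :
    ∫ z : ℂ, (rexp (-‖z‖ ^ 2) : ℂ) * z ^ a * conj z ^ a = π * a ! := by
  have hradial : ∀ z : ℂ, (rexp (-‖z‖ ^ 2) : ℂ) * z ^ a * conj z ^ a =
      ((‖z‖ ^ (2 * a) * rexp (-‖z‖ ^ 2) : ℝ) : ℂ) := fun z => by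
    rw [mul_assoc, ← mul_pow, Complex.mul_conj, Complex.normSq_eq_norm_sq, pow_mul]
    push_cast
    ring
  simp_rw [hradial, integral_complex_ofReal, integral_norm_pow_mul_exp_neg_norm_sq]
  push_cast
  rw [mul_div_cancel_left₀ _ two_ne_zero, Real.Gamma_nat_eq_factorial]
  norm_cast

theorem integral_exp_neg_norm_sq_mul_pow_mul_conj_pow_of_ne {a b : ℕ} (hab : a ≠ b) :
    ∫ z : ℂ, (rexp (-‖z‖ ^ 2) : ℂ) * z ^ a * conj z ^ b = 0 := by
  have hab' : (a : ℂ) - b ≠ 0 := sub_ne_zero.mpr (by exact_mod_cast hab)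
  -- the rotation by `π / (a - b)` multiplies the integrand by `-1`
  set u := Circle.exp (π / (a - b))
  refine integral_eq_zero_of_comp_mul_eq_smul (u := u) (w := -1) (by norm_num) fun z => ?_
  have hu : (u : ℂ) ^ a * conj (u : ℂ) ^ b = -1 := by
    rw [Circle.coe_exp, ← Complex.exp_conj, ← Complex.exp_nat_mul, ← Complex.exp_nat_mul,
      ← Complex.exp_add, ← Complex.exp_pi_mul_I]
    congr 1
    simp only [map_mul, Complex.conj_ofReal, Complex.conj_I]
    push_cast
    field_simp
    ring
  rw [norm_mul, Circle.norm_coe, one_mul, map_mul, mul_pow, mul_pow, smul_eq_mul]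
  linear_combination (rexp (-‖z‖ ^ 2) : ℂ) * z ^ a * conj z ^ b * hu

noncomputable def ginibreDensity {n : ℕ} (z : Fin n → ℂ) : ℝ :=
  rexp (-∑ k, ‖z k‖ ^ 2) *
    ∏ p ∈ univ.filter (fun p : Fin n × Fin n => p.1 < p.2), ‖z p.1 - z p.2‖ ^ 2

theorem ginibreDensity_eq_det_mul_det {n : ℕ} (z : Fin n → ℂ) :
    (ginibreDensity z : ℂ) =
      (of fun i j : Fin n => (rexp (-‖z i‖ ^ 2) : ℂ) * z i ^ (j : ℕ)).det *
        (of fun i j : Fin n => conj (z i) ^ (j : ℕ)).det := by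
  have hweight : (of fun i j : Fin n => (rexp (-‖z i‖ ^ 2) : ℂ) * z i ^ (j : ℕ)).det =
      (∏ i, (rexp (-‖z i‖ ^ 2) : ℂ)) * (vandermonde z).det :=
    det_mul_column _ _
  have hconj : (of fun i j : Fin n => conj (z i) ^ (j : ℕ)).det = conj (vandermonde z).det := by
    rw [RingHom.map_det]
    congr 1
    ext i j
    simp [vandermonde_apply]
  rw [ginibreDensity, hweight, hconj, mul_assoc, Complex.mul_conj',
    prod_lt_norm_sub_sq_eq_norm_det_vandermonde_sq, ← sum_neg_distrib, Real.exp_sum]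
  push_cast
  rfl

theorem ginibre_gram_eq_diagonal (n : ℕ) :
    (of fun a b : Fin n => ∫ z : ℂ, (rexp (-‖z‖ ^ 2) : ℂ) * z ^ (a : ℕ) * conj z ^ (b : ℕ)) =
      diagonal fun a : Fin n => (π : ℂ) * (a : ℕ)! := by
  ext a b
  rcases eq_or_ne a b with rfl | hab
  · rw [of_apply, diagonal_apply_eq, integral_exp_neg_norm_sq_mul_pow_mul_conj_pow_self]
  · rw [of_apply, diagonal_apply_ne _ hab,
      integral_exp_neg_norm_sq_mul_pow_mul_conj_pow_of_ne (Fin.val_injective.ne hab)]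

theorem integral_ginibreDensity (n : ℕ) :
    ∫ z : Fin n → ℂ, ginibreDensity z = π ^ n * n.superFactorial := by
  have hcomplex : ((∫ z : Fin n → ℂ, ginibreDensity z : ℝ) : ℂ) =
      n ! * ∏ i : Fin n, (π : ℂ) * (i : ℕ)! := by
    rw [← integral_complex_ofReal]
    simp_rw [ginibreDensity_eq_det_mul_det]
    rw [volume_pi, integral_det_mul_det_eq_factorial_mul_det _ _ _
      fun a b : Fin n => integrable_exp_neg_norm_sq_mul_pow_mul_conj_pow a b,
      Fintype.card_fin, ginibre_gram_eq_diagonal, det_diagonal]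
  rw [prod_mul_distrib, prod_const, card_univ, Fintype.card_fin,
    Fin.prod_univ_eq_prod_range (fun i => ((i ! : ℕ) : ℂ)), mul_left_comm] at hcomplex
  rw [← Nat.prod_range_succ_factorial, prod_range_succ, mul_comm (∏ i ∈ range n, i !)]
  exact_mod_cast hcomplex

/-- The normalization constant of the complex Ginibre eigenvalue density:
`(1/π^N) ∫_{ℂ^N} exp(-∑|z_k|²) ∏_{i<j}|z_i - z_j|² d²z = ∏_{k=1}^N Γ(k+1)`. -/
theorem ginibre_normalization (N : ℕ) :
    (Real.pi ^ N)⁻¹ *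
      (∫ z : Fin N → ℂ,
        Real.exp (-∑ k, ‖z k‖ ^ 2) *
          ∏ p ∈ Finset.univ.filter (fun p : Fin N × Fin N => p.1 < p.2), ‖z p.1 - z p.2‖ ^ 2) =
      ∏ k ∈ Finset.Icc 1 N, Real.Gamma ((k : ℝ) + 1) := by
  change (π ^ N)⁻¹ * ∫ z, ginibreDensity z = _
  rw [integral_ginibreDensity, inv_mul_cancel_left₀ (pow_ne_zero _ pi_ne_zero)]
  simp_rw [Real.Gamma_nat_eq_factorial]
  exact_mod_cast (Nat.prod_Icc_factorial N).symm
end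

section
/- For a random N×N complex induced Ginibre matrix G with rectangularity index L ≥ 0, the probability that the minimum eigenvalue modulus is at least r equals ∏_{k=1}^N Γ(k+L, r²)/Γ(k+L). -/
open MeasureTheory Real Filter Finset Topology Asymptotics

/-- Upper incomplete Gamma function `Γ(a,x) = ∫_x^∞ t^(a-1) e^(-t) dt`. -/
noncomputable def uGamma (a x : ℝ) : ℝ := ∫ t in Set.Ioi x, t ^ (a - 1) * Real.exp (-t)

/-- Joint eigenvalue density of the `N × N` complex induced Ginibre ensemble with
rectangularity index `L`. -/
noncomputable def inducedGinibreDensity (N : ℕ) (L : ℝ) (z : Fin N → ℂ) : ℝ :=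
  ((N.factorial : ℝ) * Real.pi ^ N * ∏ k ∈ Finset.Icc 1 N, Real.Gamma ((k : ℝ) + L))⁻¹ *
    (∏ p ∈ Finset.univ.filter (fun p : Fin N × Fin N => p.1 < p.2), ‖z p.1 - z p.2‖ ^ 2) *
    (∏ j, ‖z j‖ ^ (2 * L)) * Real.exp (-∑ j, ‖z j‖ ^ 2)

/-!
The density is `|det V(z)|² ∏ⱼ w(|zⱼ|)` with `V` the Vandermonde matrix, and the event is the
product set `{|z| ≥ r}ᴺ`. By Andréief's identity, the integral of `det [fᵢ(zⱼ)] · det [gᵢ(zⱼ)]`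
against a product measure is `N!` times the determinant of the Gram matrix `∫ fᵢ gⱼ`. For
`fᵢ(z) = zⁱ` and `gⱼ(z) = z̄ʲ` and a radial weight restricted to `{|z| ≥ r}` this Gram matrix is
diagonal by rotation invariance, and in polar coordinates its diagonal entries are
`π Γ(i + 1 + L, r²)`.
-/

section Andreief

open Equiv

variable {ι : Type*} [Fintype ι] [DecidableEq ι]

theorem sum_sign_mul_sign_mul_prod_eq_factorial_mul_det {R : Type*} [CommRing R]
    (M : Matrix ι ι R) :
    ∑ σ : Perm ι, ∑ τ : Perm ι, ((Perm.sign σ * Perm.sign τ : ℤ) : R) * ∏ i, M (σ i) (τ i) =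
      (Fintype.card ι).factorial * M.det := by
  have inner (σ : Perm ι) :
      ∑ τ : Perm ι, ((Perm.sign σ * Perm.sign τ : ℤ) : R) * ∏ i, M (σ i) (τ i) = M.det := by
    rw [← M.det_transpose, Matrix.det_apply]
    refine Fintype.sum_equiv (Equiv.mulRight σ⁻¹) _ _ fun τ => ?_
    rw [Equiv.coe_mulRight, Perm.sign_mul, Perm.sign_inv, Units.smul_def, zsmul_eq_mul,
      ← Equiv.prod_comp σ fun i => M.transpose ((τ * σ⁻¹) i) i]
    simp [mul_comm]
  simp only [inner, Finset.sum_const, Finset.card_univ, Fintype.card_perm, nsmul_eq_mul]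

/-- Andréief's identity, with a weight `w` pulled out of the two determinants. -/
theorem integral_prod_mul_det_mul_det {E 𝕜 : Type*} [RCLike 𝕜] [MeasurableSpace E]
    (μ : Measure E) [SigmaFinite μ] (w : E → 𝕜) (f g : ι → E → 𝕜)
    (hint : ∀ i j, Integrable (fun x => w x * f i x * g j x) μ) :
    ∫ x : ι → E, (∏ k, w (x k)) * (Matrix.of fun i k => f i (x k)).det *
        (Matrix.of fun i k => g i (x k)).det ∂(Measure.pi fun _ => μ) =
      (Fintype.card ι).factorial * (Matrix.of fun i j => ∫ x, w x * f i x * g j x ∂μ).det := by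
  have expand (x : ι → E) : (∏ k, w (x k)) * (Matrix.of fun i k => f i (x k)).det *
      (Matrix.of fun i k => g i (x k)).det = ∑ σ : Perm ι, ∑ τ : Perm ι,
        ((Perm.sign σ * Perm.sign τ : ℤ) : 𝕜) * ∏ k, (w (x k) * f (σ k) (x k) * g (τ k) (x k)) := by
    rw [mul_assoc, Matrix.det_apply, Matrix.det_apply, Finset.sum_mul_sum]
    simp only [Finset.mul_sum]
    refine Finset.sum_congr rfl fun σ _ => Finset.sum_congr rfl fun τ _ => ?_
    simp only [Matrix.of_apply, Units.smul_def, zsmul_eq_mul, Finset.prod_mul_distrib]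
    push_cast
    ring
  have hprod (σ τ : Perm ι) : Integrable (fun x : ι → E =>
      ∏ k, (w (x k) * f (σ k) (x k) * g (τ k) (x k))) (Measure.pi fun _ => μ) :=
    Integrable.fintype_prod (f := fun k x => w x * f (σ k) x * g (τ k) x) fun k => hint _ _
  simp_rw [expand]
  rw [integral_finsetSum _ fun σ _ => integrable_finsetSum _ fun τ _ => (hprod σ τ).const_mul _,
    ← sum_sign_mul_sign_mul_prod_eq_factorial_mul_det]
  refine Finset.sum_congr rfl fun σ _ => ?_
  rw [integral_finsetSum _ fun τ _ => (hprod σ τ).const_mul _]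
  refine Finset.sum_congr rfl fun τ _ => ?_
  rw [integral_const_mul, integral_fintype_prod_eq_prod (fun k x => w x * f (σ k) x * g (τ k) x)]
  rfl

end Andreief

section Polar

theorem integral_Ioo_neg_pi_pi_exp_int_mul_mul_I (n : ℤ) :
    ∫ θ in Set.Ioo (-π) π, Complex.exp (n * θ * Complex.I) =
      if n = 0 then (2 * π : ℂ) else 0 := by
  rw [← integral_Ioc_eq_integral_Ioo, ← intervalIntegral.integral_of_le (by linarith [pi_pos])]
  split_ifs with hn
  · simp [hn]
    ring
  · have hnI : (n : ℂ) * Complex.I ≠ 0 := by simp [hn]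
    simp_rw [mul_right_comm _ _ Complex.I]
    rw [integral_exp_mul_complex hnI, div_eq_zero_iff, sub_eq_zero]
    -- the exponents `± n π i` differ by `n · 2 π i`
    refine Or.inl (Complex.exp_eq_exp_iff_exists_int.2 ⟨n, ?_⟩)
    push_cast
    ring

theorem setIntegral_le_norm_mul_pow_mul_conj_pow (f : ℝ → ℂ) {r : ℝ} (hr : 0 ≤ r) (a b : ℕ) :
    ∫ z in {z : ℂ | r ≤ ‖z‖}, f ‖z‖ * z ^ a * (starRingEnd ℂ z) ^ b =
      if a = b then 2 * π * ∫ ρ in Set.Ioi r, (ρ : ℂ) ^ (2 * a + 1) * f ρ else 0 := by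
  set g : ℝ → ℂ := (Set.Ici r).indicator fun ρ => (ρ : ℂ) ^ (a + b + 1) * f ρ
  have hpolar : ∀ p ∈ Set.Ioi (0 : ℝ) ×ˢ Set.Ioo (-π) π,
      p.1 • {z : ℂ | r ≤ ‖z‖}.indicator (fun z => f ‖z‖ * z ^ a * (starRingEnd ℂ z) ^ b)
        (Complex.polarCoord.symm p) = g p.1 * Complex.exp ((a - b : ℤ) * p.2 * Complex.I) := by
    rintro ⟨ρ, θ⟩ ⟨hρ : 0 < ρ, -⟩
    have hz : Complex.polarCoord.symm (ρ, θ) = ρ * Complex.exp (θ * Complex.I) := by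
      rw [Complex.polarCoord_symm_apply, Complex.exp_mul_I]
      push_cast
      ring
    have hnorm : ‖Complex.polarCoord.symm (ρ, θ)‖ = ρ := by
      rw [Complex.norm_polarCoord_symm, abs_of_pos hρ]
    simp only [Set.indicator_apply, Set.mem_ofPred_eq, Set.mem_Ici, hnorm, g]
    split_ifs
    · rw [hz, map_mul, Complex.conj_ofReal, ← Complex.exp_conj, map_mul, Complex.conj_ofReal,
        Complex.conj_I, mul_pow, mul_pow, ← Complex.exp_nat_mul, ← Complex.exp_nat_mul,
        Complex.real_smul, show ((a - b : ℤ) : ℂ) * θ * Complex.I =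
          a * (θ * Complex.I) + b * (θ * -Complex.I) by push_cast; ring, Complex.exp_add]
      ring
    · simp
  have hS : MeasurableSet {z : ℂ | r ≤ ‖z‖} := measurableSet_le measurable_const measurable_norm
  rw [← integral_indicator hS, ← Complex.integral_comp_polarCoord_symm, polarCoord_target,
    setIntegral_congr_fun (measurableSet_Ioi.prod measurableSet_Ioo) hpolar,
    Measure.volume_eq_prod,
    setIntegral_prod_mul g (fun θ : ℝ => Complex.exp ((a - b : ℤ) * θ * Complex.I)),
    integral_Ioo_neg_pi_pi_exp_int_mul_mul_I]
  simp only [sub_eq_zero, Nat.cast_inj]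
  split_ifs with hab
  · subst hab
    have hset : (Set.Ici r ∩ Set.Ioi 0 : Set ℝ) =ᵐ[volume] Set.Ioi r := by
      simpa [Set.Ioi_inter_Ioi, hr] using ae_eq_set_inter (Ioi_ae_eq_Ici (a := r)).symm
        (EventuallyEq.refl _ (Set.Ioi (0 : ℝ)))
    rw [integral_indicator measurableSet_Ici, Measure.restrict_restrict measurableSet_Ici,
      setIntegral_congr_set hset, mul_comm, two_mul a]
  · rw [mul_zero]

theorem setIntegral_Ioi_rpow_mul_exp_neg_sq (c : ℝ) {r : ℝ} (hr : 0 ≤ r) :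
    ∫ ρ in Set.Ioi r, ρ ^ (2 * c + 1) * exp (-ρ ^ 2) = uGamma (c + 1) (r ^ 2) / 2 := by
  have hderiv : ∀ x ∈ Set.Ioi r, HasDerivWithinAt (fun x : ℝ => x ^ 2) (2 * x) (Set.Ioi r) x :=
    fun x _ => by simpa using (hasDerivAt_pow 2 x).hasDerivWithinAt
  have hinj : Set.InjOn (fun x : ℝ => x ^ 2) (Set.Ioi r) := fun x hx y hy hxy =>
    (sq_eq_sq₀ (hr.trans hx.le) (hr.trans hy.le)).1 hxy
  have himage : (fun x : ℝ => x ^ 2) '' Set.Ioi r = Set.Ioi (r ^ 2) := by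
    ext t
    constructor
    · rintro ⟨x, hx, rfl⟩
      exact pow_lt_pow_left₀ hx hr two_ne_zero
    · intro ht
      exact ⟨√t, (lt_sqrt hr).2 ht, sq_sqrt ((sq_nonneg r).trans ht.le)⟩
  have hsubst := integral_image_eq_integral_abs_deriv_smul measurableSet_Ioi hderiv hinj
    (fun t => t ^ c * exp (-t))
  rw [himage] at hsubst
  rw [uGamma, add_sub_cancel_right, hsubst, ← integral_div]
  refine setIntegral_congr_fun measurableSet_Ioi fun x (hx : r < x) => ?_
  have hx0 : 0 < x := hr.trans_lt hx
  rw [smul_eq_mul, abs_of_pos (by positivity), ← rpow_natCast, ← rpow_mul hx0.le,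
    rpow_add hx0, rpow_one]
  push_cast
  ring

theorem integrable_norm_rpow_mul_exp_neg_sq {c : ℝ} (hc : -2 < c) :
    Integrable fun z : ℂ => ‖z‖ ^ c * exp (-‖z‖ ^ 2) := by
  rw [integrable_fun_norm_addHaar volume (f := fun ρ => ρ ^ c * exp (-ρ ^ 2)),
    Complex.finrank_real_complex]
  refine (integrableOn_rpow_mul_exp_neg_mul_sq one_pos (s := c + 1) (by linarith)).congr_fun
    (fun ρ (hρ : 0 < ρ) => ?_) measurableSet_Ioi
  simp [rpow_add hρ]
  ring

end Polar

section InducedGinibre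

noncomputable def inducedGinibreWeight (L ρ : ℝ) : ℂ := ((ρ ^ (2 * L) * exp (-ρ ^ 2) : ℝ) : ℂ)

theorem prod_norm_sub_sq_eq_norm_det_vandermonde_sq {K : Type*} [NormedField K] {n : ℕ}
    (v : Fin n → K) :
    ∏ p ∈ univ.filter (fun p : Fin n × Fin n => p.1 < p.2), ‖v p.1 - v p.2‖ ^ 2 =
      ‖(Matrix.vandermonde v).det‖ ^ 2 := by
  rw [Matrix.det_vandermonde, norm_prod, ← prod_pow, Finset.prod_filter, Fintype.prod_prod_type]
  refine Finset.prod_congr rfl fun i _ => ?_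
  rw [norm_prod, ← prod_pow, ← Finset.filter_lt_eq_Ioi, Finset.prod_filter]
  simp_rw [norm_sub_rev (v i)]

theorem inducedGinibreDensity_eq (N : ℕ) (L : ℝ) (z : Fin N → ℂ) :
    (inducedGinibreDensity N L z : ℂ) =
      ((N.factorial * π ^ N * ∏ k ∈ Icc 1 N, Gamma (k + L))⁻¹ : ℝ) *
        ((∏ k, inducedGinibreWeight L ‖z k‖) * (Matrix.of fun i k : Fin N => z k ^ (i : ℕ)).det *
          (Matrix.of fun i k : Fin N => (starRingEnd ℂ (z k)) ^ (i : ℕ)).det) := by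
  have hconj : (Matrix.of fun i k : Fin N => (starRingEnd ℂ (z k)) ^ (i : ℕ)).det =
      starRingEnd ℂ (Matrix.of fun i k : Fin N => z k ^ (i : ℕ)).det := by
    rw [RingHom.map_det]
    congr 1
    ext i k
    simp
  have hvdm : (Matrix.of fun i k : Fin N => z k ^ (i : ℕ)).det = (Matrix.vandermonde z).det :=
    Matrix.det_transpose _
  have hweight : ∏ k, inducedGinibreWeight L ‖z k‖ =
      ((∏ k, ‖z k‖ ^ (2 * L)) * exp (-∑ k, ‖z k‖ ^ 2) : ℝ) := by
    simp only [inducedGinibreWeight, ← Complex.ofReal_prod, prod_mul_distrib, ← sum_neg_distrib,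
      exp_sum]
  rw [hconj, hvdm, mul_assoc (∏ k, inducedGinibreWeight L ‖z k‖), Complex.mul_conj',
    ← Complex.ofReal_pow, ← prod_norm_sub_sq_eq_norm_det_vandermonde_sq, inducedGinibreDensity,
    hweight]
  push_cast
  ring

theorem setIntegral_le_norm_inducedGinibreWeight_mul_pow_mul_conj_pow (L : ℝ) {r : ℝ}
    (hr : 0 ≤ r) (a b : ℕ) :
    ∫ z in {z : ℂ | r ≤ ‖z‖}, inducedGinibreWeight L ‖z‖ * z ^ a * (starRingEnd ℂ z) ^ b =
      if a = b then ((π * uGamma (a + 1 + L) (r ^ 2) : ℝ) : ℂ) else 0 := by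
  rw [setIntegral_le_norm_mul_pow_mul_conj_pow _ hr]
  split_ifs
  · have hradial : ∫ ρ in Set.Ioi r, (ρ : ℂ) ^ (2 * a + 1) * inducedGinibreWeight L ρ =
        ((∫ ρ in Set.Ioi r, ρ ^ (2 * (a + L) + 1) * exp (-ρ ^ 2) : ℝ) : ℂ) := by
      rw [← integral_complex_ofReal]
      refine setIntegral_congr_fun measurableSet_Ioi fun ρ (hρ : r < ρ) => ?_
      have hρ0 : 0 < ρ := hr.trans_lt hρ
      rw [inducedGinibreWeight, ← Complex.ofReal_pow, ← Complex.ofReal_mul, mul_add,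
        add_right_comm, rpow_add hρ0, ← rpow_natCast]
      push_cast
      ring
    rw [hradial, setIntegral_Ioi_rpow_mul_exp_neg_sq _ hr]
    push_cast
    ring_nf
  · rfl

theorem integrable_inducedGinibreWeight_mul_pow_mul_conj_pow {L : ℝ} (hL : -1 < L) (a b : ℕ) :
    Integrable fun z : ℂ => inducedGinibreWeight L ‖z‖ * z ^ a * (starRingEnd ℂ z) ^ b := by
  refine (integrable_norm_rpow_mul_exp_neg_sq (c := 2 * L + a + b)
    (by linarith [a.cast_nonneg (α := ℝ), b.cast_nonneg (α := ℝ)])).mono'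
    (by unfold inducedGinibreWeight; fun_prop) ?_
  filter_upwards [compl_mem_ae_iff.2 (measure_singleton (0 : ℂ))] with z (hz : z ≠ 0)
  have hz' : 0 < ‖z‖ := norm_pos_iff.2 hz
  refine le_of_eq ?_
  rw [inducedGinibreWeight, norm_mul, norm_mul, norm_pow, norm_pow, Complex.norm_conj,
    Complex.norm_real, norm_of_nonneg (by positivity), rpow_add hz', rpow_add hz',
    rpow_natCast, rpow_natCast]
  ring

end InducedGinibre

theorem prod_Icc_one_eq_prod_fin {M : Type*} [CommMonoid M] (f : ℕ → M) (n : ℕ) :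
    ∏ k ∈ Icc 1 n, f k = ∏ i : Fin n, f (i + 1) := by
  rw [Fin.prod_univ_eq_prod_range (fun i => f (i + 1)), range_eq_Ico, prod_Ico_add' f 0 n 1,
    zero_add, Ico_add_one_right_eq_Icc]

/-- For the complex induced Ginibre ensemble with rectangularity index `L ≥ 0`, the probability
that the minimum eigenvalue modulus is at least `r` equals `∏_{k=1}^N Γ(k+L, r²)/Γ(k+L)`. -/
theorem induced_ginibre_min_modulus_gap_probability (N : ℕ) (L : ℝ) (hL : 0 ≤ L)
    (r : ℝ) (hr : 0 ≤ r) :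
    (∫ z in {z : Fin N → ℂ | ∀ j, r ≤ ‖z j‖}, inducedGinibreDensity N L z) =
      ∏ k ∈ Finset.Icc 1 N, uGamma ((k : ℝ) + L) (r ^ 2) / Real.Gamma ((k : ℝ) + L) := by
  set S : Set ℂ := {z | r ≤ ‖z‖}
  have hT : {z : Fin N → ℂ | ∀ j, r ≤ ‖z j‖} = Set.univ.pi fun _ => S := by ext; simp [S]
  have hgram : (Matrix.of fun i j : Fin N => ∫ z in S,
      inducedGinibreWeight L ‖z‖ * z ^ (i : ℕ) * (starRingEnd ℂ z) ^ (j : ℕ)) =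
        Matrix.diagonal fun i : Fin N => ((π * uGamma ((i : ℕ) + 1 + L) (r ^ 2) : ℝ) : ℂ) := by
    ext i j
    simp [S, setIntegral_le_norm_inducedGinibreWeight_mul_pow_mul_conj_pow L hr,
      Matrix.diagonal_apply, Fin.val_inj]
  apply Complex.ofReal_injective
  rw [← integral_complex_ofReal, hT, volume_pi, Measure.restrict_pi_pi]
  simp_rw [inducedGinibreDensity_eq]
  rw [integral_const_mul, integral_prod_mul_det_mul_det _ _ _ _ fun i j =>
      (integrable_inducedGinibreWeight_mul_pow_mul_conj_pow (by linarith) _ _).integrableOn,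
    hgram, Matrix.det_diagonal, prod_Icc_one_eq_prod_fin, prod_Icc_one_eq_prod_fin,
    Fintype.card_fin]
  have hfac : (N.factorial : ℂ) ≠ 0 := by exact_mod_cast N.factorial_ne_zero
  have hpi : (π : ℂ) ^ N ≠ 0 := pow_ne_zero _ (Complex.ofReal_ne_zero.2 pi_ne_zero)
  push_cast
  simp only [prod_mul_distrib, prod_const, Finset.card_univ, Fintype.card_fin, prod_div_distrib]
  field_simp
end

section
/- For a random N×N complex induced Ginibre matrix G with rectangularity index L ≥ 0 and any radii 0 ≤ r ≤ R, the probability that all eigenvalue moduli lie in [r, R] equals ∏_{k=1}^N (γ(k+L, R²) − γ(k+L, r²))/Γ(k+L). -/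
open MeasureTheory Real Filter Finset Topology Asymptotics

/-- Lower incomplete Gamma function `γ(a,x) = ∫_0^x t^(a-1) e^(-t) dt`. -/
noncomputable def lGamma (a x : ℝ) : ℝ := ∫ t in Set.Ioc 0 x, t ^ (a - 1) * Real.exp (-t)

/-! Expanding `|det V(z)|² = det V(z) · conj (det V(z))` over pairs of permutations `(σ, τ)` and
integrating against a product of radial weights, rotation invariance kills every term with
`σ ≠ τ` (Andréief's identity), leaving `N!` times the product of the radial moments
`∫ |z|^{2k} w(|z|)`, `0 ≤ k < N`. In polar coordinates and after `t = s²`, the `k`-th moment of the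
weight `|z|^{2L} e^{-|z|²}` cut off to the annulus is `π (γ(k+1+L, R²) - γ(k+1+L, r²))`;
the factors `N!` and `π^N` cancel against the normalisation of the density. -/

open ComplexConjugate Matrix
open scoped Nat

theorem Matrix.det_vandermonde_eq_sum_perm {R : Type*} [CommRing R] {n : ℕ} (v : Fin n → R) :
    (vandermonde v).det = ∑ σ : Equiv.Perm (Fin n), Equiv.Perm.sign σ * ∏ i, v i ^ (σ i : ℕ) := by
  rw [← det_transpose, det_apply']
  rfl

theorem prod_norm_sub_sq_eq_normSq_det_vandermonde {N : ℕ} (z : Fin N → ℂ) :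
    ∏ p ∈ univ.filter (fun p : Fin N × Fin N => p.1 < p.2), ‖z p.1 - z p.2‖ ^ 2 =
      Complex.normSq (vandermonde z).det := by
  rw [det_vandermonde, Complex.normSq_eq_norm_sq, norm_prod, ← prod_pow, prod_filter,
    ← univ_product_univ, prod_product]
  refine prod_congr rfl fun i _ => ?_
  rw [norm_prod, ← prod_pow, ← filter_lt_eq_Ioi, prod_filter]
  simp_rw [norm_sub_rev]

theorem det_vandermonde_mul_conj_mul_prod_eq_sum {N : ℕ} (z : Fin N → ℂ) (g : ℂ → ℂ) :
    (vandermonde z).det * conj (vandermonde z).det * ∏ i, g (z i) =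
      ∑ σ : Equiv.Perm (Fin N), ∑ τ : Equiv.Perm (Fin N),
        (Equiv.Perm.sign σ * Equiv.Perm.sign τ : ℂ) *
          ∏ i, z i ^ (σ i : ℕ) * conj (z i) ^ (τ i : ℕ) * g (z i) := by
  rw [det_vandermonde_eq_sum_perm, map_sum, sum_mul_sum, sum_mul]
  refine sum_congr rfl fun σ _ => ?_
  rw [sum_mul]
  refine sum_congr rfl fun τ _ => ?_
  simp only [map_mul, map_prod, map_pow, map_intCast, prod_mul_distrib]
  ring

/-- Rotating by `e^{iπ/(a-b)}` multiplies the integral by `-1`. -/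
theorem integral_pow_mul_conj_pow_mul_radial_eq_zero (f : ℝ → ℂ) {a b : ℕ} (hab : a ≠ b) :
    ∫ z : ℂ, z ^ a * conj z ^ b * f ‖z‖ = 0 := by
  set c : Circle := Circle.exp (π / ((a : ℝ) - b))
  have hc : (c : ℂ) ^ a * conj (c : ℂ) ^ b = -1 := by
    have hab' : ((a : ℂ) - b) ≠ 0 := sub_ne_zero.2 (by exact_mod_cast hab)
    rw [Circle.coe_exp, ← Complex.exp_conj, ← Complex.exp_nat_mul, ← Complex.exp_nat_mul,
      ← Complex.exp_add, ← Complex.exp_pi_mul_I]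
    congr 1
    simp only [map_mul, Complex.conj_ofReal, Complex.conj_I]
    push_cast
    field_simp
    ring
  have hrot : ∫ z : ℂ, (c * z) ^ a * conj (c * z) ^ b * f ‖c * z‖ =
      ∫ z : ℂ, z ^ a * conj z ^ b * f ‖z‖ :=
    (rotation c).measurePreserving.integral_comp
      (rotation c).toHomeomorph.measurableEmbedding (fun z => z ^ a * conj z ^ b * f ‖z‖)
  simp_rw [map_mul, norm_mul, Circle.norm_coe, one_mul, mul_pow] at hrot
  refine self_eq_neg.1 ?_
  calc ∫ z : ℂ, z ^ a * conj z ^ b * f ‖z‖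
      = ∫ z : ℂ, (c : ℂ) ^ a * conj (c : ℂ) ^ b * (z ^ a * conj z ^ b * f ‖z‖) := by
        rw [← hrot]; congr 1 with z; ring
    _ = -∫ z : ℂ, z ^ a * conj z ^ b * f ‖z‖ := by rw [integral_const_mul, hc, neg_one_mul]

theorem integral_det_vandermonde_mul_conj_mul_prod {N : ℕ} (f : ℝ → ℂ)
    (hf : ∀ a b : ℕ, Integrable fun z : ℂ => z ^ a * conj z ^ b * f ‖z‖) :
    ∫ z : Fin N → ℂ, (vandermonde z).det * conj (vandermonde z).det * ∏ i, f ‖z i‖ =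
      N ! * ∏ k : Fin N, ∫ z : ℂ, z ^ (k : ℕ) * conj z ^ (k : ℕ) * f ‖z‖ := by
  set J : ℕ → ℕ → ℂ := fun a b => ∫ z : ℂ, z ^ a * conj z ^ b * f ‖z‖
  simp_rw [det_vandermonde_mul_conj_mul_prod_eq_sum _ (fun x => f ‖x‖)]
  have hint : ∀ σ τ : Equiv.Perm (Fin N), Integrable fun z : Fin N → ℂ =>
      ∏ i, z i ^ (σ i : ℕ) * conj (z i) ^ (τ i : ℕ) * f ‖z i‖ :=
    fun σ τ => Integrable.fintype_prod
      (f := fun i x => x ^ (σ i : ℕ) * conj x ^ (τ i : ℕ) * f ‖x‖) fun _ => hf _ _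
  calc _ = ∑ σ : Equiv.Perm (Fin N), ∑ τ : Equiv.Perm (Fin N),
        (Equiv.Perm.sign σ * Equiv.Perm.sign τ : ℂ) * ∏ i, J (σ i) (τ i) := by
        rw [integral_finsetSum _ fun σ _ =>
          integrable_finsetSum _ fun τ _ => (hint σ τ).const_mul _]
        refine sum_congr rfl fun σ _ => ?_
        rw [integral_finsetSum _ fun τ _ => (hint σ τ).const_mul _]
        refine sum_congr rfl fun τ _ => ?_
        rw [integral_const_mul, integral_fintype_prod_volume_eq_prod
          (fun i x => x ^ (σ i : ℕ) * conj x ^ (τ i : ℕ) * f ‖x‖)]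
    _ = ∑ _σ : Equiv.Perm (Fin N), ∏ k : Fin N, J k k := by
        refine sum_congr rfl fun σ _ => ?_
        rw [sum_eq_single σ]
        · rw [← Int.cast_mul, ← Units.val_mul, Int.units_mul_self, Units.val_one, Int.cast_one,
            one_mul, Equiv.prod_comp σ (fun k => J k k)]
        · intro τ _ hτ
          obtain ⟨i, hi⟩ : ∃ i, σ i ≠ τ i := by
            by_contra! h
            exact hτ (Equiv.ext h).symm
          rw [prod_eq_zero (mem_univ i) (integral_pow_mul_conj_pow_mul_radial_eq_zero f
            (Fin.val_injective.ne hi)), mul_zero]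
        · exact fun h => absurd (mem_univ σ) h
    _ = N ! * ∏ k : Fin N, J k k := by
        rw [sum_const, card_univ, Fintype.card_perm, Fintype.card_fin, nsmul_eq_mul]

theorem integral_normSq_det_vandermonde_mul_prod {N : ℕ} (f : ℝ → ℝ)
    (hf : ∀ n : ℕ, Integrable fun z : ℂ => ‖z‖ ^ n * f ‖z‖) :
    ∫ z : Fin N → ℂ, Complex.normSq (vandermonde z).det * ∏ i, f ‖z i‖ =
      N ! * ∏ k ∈ range N, ∫ z : ℂ, ‖z‖ ^ (2 * k) * f ‖z‖ := by
  have hmeas : AEStronglyMeasurable (fun z : ℂ => (f ‖z‖ : ℂ)) := by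
    simpa using Complex.continuous_ofReal.comp_aestronglyMeasurable (hf 0).aestronglyMeasurable
  have hint (a b : ℕ) : Integrable fun z : ℂ => z ^ a * conj z ^ b * (f ‖z‖ : ℂ) := by
    refine ((hf (a + b)).ofReal (𝕜 := ℂ)).mono
      ((by fun_prop : Continuous fun z : ℂ => z ^ a * conj z ^ b).aestronglyMeasurable.mul hmeas)
      (Eventually.of_forall fun z => ?_)
    simp [pow_add]
  have hmoment (z : ℂ) (k : ℕ) : z ^ k * conj z ^ k = ((‖z‖ ^ (2 * k) : ℝ) : ℂ) := by
    rw [← mul_pow, Complex.mul_conj', pow_mul]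
    push_cast; rfl
  have key := integral_det_vandermonde_mul_conj_mul_prod (N := N) (fun s => (f s : ℂ)) hint
  simp_rw [Complex.mul_conj, hmoment] at key
  norm_cast at key
  rwa [← Fin.prod_univ_eq_prod_range (fun k => ∫ z : ℂ, ‖z‖ ^ (2 * k) * f ‖z‖)]

theorem Complex.integral_fun_norm {E : Type*} [NormedAddCommGroup E] [NormedSpace ℝ E]
    (f : ℝ → E) : ∫ z : ℂ, f ‖z‖ = (2 * π) • ∫ s in Set.Ioi 0, s • f s := by
  have hball : volume.real (Metric.ball (0 : ℂ) 1) = π := by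
    simp [measureReal_def, Complex.volume_ball]
  rw [integral_fun_norm_addHaar volume f, Complex.finrank_real_complex, hball, ← smul_assoc]
  norm_num

theorem lGamma_sub_lGamma {a x y : ℝ} (ha : 0 < a) (hx : 0 ≤ x) (hxy : x ≤ y) :
    lGamma a y - lGamma a x = ∫ t in Set.Ioc x y, t ^ (a - 1) * exp (-t) := by
  have hint : ∀ u, 0 ≤ u → IntervalIntegrable (fun t => t ^ (a - 1) * exp (-t)) volume 0 u := by
    intro u hu
    rw [intervalIntegrable_iff_integrableOn_Ioc_of_le hu]
    simpa only [mul_comm] using (GammaIntegral_convergent ha).mono_set Set.Ioc_subset_Ioi_self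
  rw [lGamma, lGamma, ← intervalIntegral.integral_of_le hx,
    ← intervalIntegral.integral_of_le (hx.trans hxy),
    intervalIntegral.integral_interval_sub_left (hint y (hx.trans hxy)) (hint x hx),
    intervalIntegral.integral_of_le hxy]

theorem integral_Ioc_mul_rpow_sq_mul_exp_neg_sq {c r R : ℝ} (hc : 0 ≤ c) (hr : 0 ≤ r)
    (hrR : r ≤ R) :
    ∫ s in Set.Ioc r R, s * ((s ^ 2) ^ c * exp (-s ^ 2)) =
      (lGamma (c + 1) (R ^ 2) - lGamma (c + 1) (r ^ 2)) / 2 := by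
  have hsubst := intervalIntegral.integral_comp_mul_deriv (a := r) (b := R)
    (f := fun s => s ^ 2) (f' := fun s => 2 * s) (g := fun t => t ^ c * exp (-t))
    (fun s _ => by simpa using hasDerivAt_pow 2 s) (by fun_prop)
    ((continuous_rpow_const hc).mul (continuous_neg.rexp))
  have hsq : r ^ 2 ≤ R ^ 2 := pow_le_pow_left₀ hr hrR 2
  rw [lGamma_sub_lGamma (by linarith) (sq_nonneg r) hsq, add_sub_cancel_right,
    ← intervalIntegral.integral_of_le hrR, ← intervalIntegral.integral_of_le hsq, ← hsubst,
    ← intervalIntegral.integral_div]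
  congr 1 with s
  simp only [Function.comp]
  ring

theorem Finset.prod_range_comp_succ_eq_prod_Icc {M : Type*} [CommMonoid M] (f : ℕ → M) (N : ℕ) :
    ∏ k ∈ range N, f (k + 1) = ∏ k ∈ Icc 1 N, f k := by
  rw [range_eq_Ico, prod_Ico_add' f 0 N 1]
  rfl

noncomputable def annulusWeight (L r R : ℝ) : ℝ → ℝ :=
  (Set.Icc r R).indicator fun s => s ^ (2 * L) * exp (-s ^ 2)

theorem integrable_norm_pow_mul_annulusWeight {L : ℝ} (hL : 0 ≤ L) (r R : ℝ) (n : ℕ) :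
    Integrable fun z : ℂ => ‖z‖ ^ n * annulusWeight L r R ‖z‖ := by
  have hann : IsCompact {z : ℂ | ‖z‖ ∈ Set.Icc r R} :=
    (isCompact_closedBall 0 R).of_isClosed_subset (isClosed_Icc.preimage continuous_norm)
      fun z hz => mem_closedBall_zero_iff.2 hz.2
  have hcont : Continuous fun z : ℂ => ‖z‖ ^ n * (‖z‖ ^ (2 * L) * exp (-‖z‖ ^ 2)) :=
    (continuous_norm.pow n).mul (((continuous_rpow_const (by positivity)).comp continuous_norm).mul
      (continuous_norm.pow 2).neg.rexp)
  have hind : (fun z : ℂ => ‖z‖ ^ n * annulusWeight L r R ‖z‖) =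
      {z : ℂ | ‖z‖ ∈ Set.Icc r R}.indicator
        fun z => ‖z‖ ^ n * (‖z‖ ^ (2 * L) * exp (-‖z‖ ^ 2)) := by
    ext z
    simp only [annulusWeight, Set.indicator_apply, Set.mem_ofPred_eq, mul_ite, mul_zero]
  rw [hind, integrable_indicator_iff hann.isClosed.measurableSet]
  exact hcont.continuousOn.integrableOn_compact hann

theorem integral_norm_pow_mul_annulusWeight {L r R : ℝ} (hL : 0 ≤ L) (hr : 0 ≤ r) (hrR : r ≤ R)
    (k : ℕ) :
    ∫ z : ℂ, ‖z‖ ^ (2 * k) * annulusWeight L r R ‖z‖ =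
      π * (lGamma (k + 1 + L) (R ^ 2) - lGamma (k + 1 + L) (r ^ 2)) := by
  have hpow {s : ℝ} (hs : 0 < s) : s ^ (2 * k) * s ^ (2 * L) = (s ^ 2) ^ ((k : ℝ) + L) := by
    rw [← rpow_two, ← rpow_mul hs.le, mul_add, rpow_add hs, ← rpow_natCast]
    push_cast; rfl
  set g : ℝ → ℝ := fun s => s * (s ^ (2 * k) * (s ^ (2 * L) * exp (-s ^ 2)))
  have hradial : ∫ s in Set.Ioi 0, s • (s ^ (2 * k) * annulusWeight L r R s) =
      ∫ s in Set.Ioc r R, s * ((s ^ 2) ^ ((k : ℝ) + L) * exp (-s ^ 2)) := calc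
    _ = ∫ s in Set.Ioi 0, (Set.Ioc r R).indicator g s := by
        refine integral_congr_ae (ae_restrict_of_ae ?_)
        filter_upwards [indicator_ae_eq_of_ae_eq_set (f := g) (Ioc_ae_eq_Icc (μ := volume))]
          with s hs
        rw [hs]
        simp only [g, annulusWeight, Set.indicator_apply, smul_eq_mul, mul_ite, mul_zero]
    _ = ∫ s in Set.Ioc r R, g s := by
        rw [integral_indicator measurableSet_Ioc, Measure.restrict_restrict measurableSet_Ioc,
          Set.inter_eq_left.2 (Set.Ioc_subset_Ioi_self.trans (Set.Ioi_subset_Ioi hr))]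
    _ = _ := by
        refine setIntegral_congr_fun measurableSet_Ioc fun s hs => ?_
        rw [← hpow (hr.trans_lt hs.1)]
        ring
  rw [Complex.integral_fun_norm (fun s => s ^ (2 * k) * annulusWeight L r R s), hradial,
    integral_Ioc_mul_rpow_sq_mul_exp_neg_sq (by positivity) hr hrR, add_right_comm, smul_eq_mul]
  ring

theorem indicator_inducedGinibreDensity (N : ℕ) (L r R : ℝ) (z : Fin N → ℂ) :
    {z : Fin N → ℂ | ∀ j, r ≤ ‖z j‖ ∧ ‖z j‖ ≤ R}.indicator (inducedGinibreDensity N L) z =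
      ((N ! : ℝ) * π ^ N * ∏ k ∈ Icc 1 N, Gamma (k + L))⁻¹ *
        (Complex.normSq (vandermonde z).det * ∏ i, annulusWeight L r R ‖z i‖) := by
  by_cases hz : z ∈ {z : Fin N → ℂ | ∀ j, r ≤ ‖z j‖ ∧ ‖z j‖ ≤ R}
  · have hweight : ∏ i, annulusWeight L r R ‖z i‖ =
        (∏ j, ‖z j‖ ^ (2 * L)) * exp (-∑ j, ‖z j‖ ^ 2) := by
      rw [← sum_neg_distrib, exp_sum, ← prod_mul_distrib]
      exact prod_congr rfl fun i _ => Set.indicator_of_mem (s := Set.Icc r R) (hz i) _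
    rw [Set.indicator_of_mem hz, inducedGinibreDensity, prod_norm_sub_sq_eq_normSq_det_vandermonde,
      hweight]
    ring
  · obtain ⟨j, hj⟩ : ∃ j, ‖z j‖ ∉ Set.Icc r R := by simpa using hz
    rw [Set.indicator_of_notMem hz, prod_eq_zero (mem_univ j) (Set.indicator_of_notMem hj _),
      mul_zero, mul_zero]

/-- For the complex induced Ginibre ensemble with rectangularity index `L ≥ 0` and radii
`0 ≤ r ≤ R`, the probability that all eigenvalue moduli lie in `[r, R]` equals
`∏_{k=1}^N (γ(k+L, R²) - γ(k+L, r²))/Γ(k+L)`. -/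
theorem induced_ginibre_annulus_probability (N : ℕ) (L : ℝ) (hL : 0 ≤ L)
    (r R : ℝ) (hr : 0 ≤ r) (hrR : r ≤ R) :
    (∫ z in {z : Fin N → ℂ | ∀ j, r ≤ ‖z j‖ ∧ ‖z j‖ ≤ R}, inducedGinibreDensity N L z) =
      ∏ k ∈ Finset.Icc 1 N,
        (lGamma ((k : ℝ) + L) (R ^ 2) - lGamma ((k : ℝ) + L) (r ^ 2)) /
          Real.Gamma ((k : ℝ) + L) := by
  have hS : MeasurableSet {z : Fin N → ℂ | ∀ j, r ≤ ‖z j‖ ∧ ‖z j‖ ≤ R} := by measurability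
  rw [← integral_indicator hS, funext (indicator_inducedGinibreDensity N L r R), integral_const_mul,
    integral_normSq_det_vandermonde_mul_prod _ (integrable_norm_pow_mul_annulusWeight hL r R)]
  simp_rw [integral_norm_pow_mul_annulusWeight hL hr hrR, prod_mul_distrib, prod_const, card_range]
  have hshift : ∏ k ∈ range N, (lGamma (k + 1 + L) (R ^ 2) - lGamma (k + 1 + L) (r ^ 2)) =
      ∏ k ∈ Icc 1 N, (lGamma (k + L) (R ^ 2) - lGamma (k + L) (r ^ 2)) := by
    simpa using prod_range_comp_succ_eq_prod_Icc
      (fun k : ℕ => lGamma (k + L) (R ^ 2) - lGamma (k + L) (r ^ 2)) N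
  have hGamma : ∏ k ∈ Icc 1 N, Gamma (k + L) ≠ 0 :=
    prod_ne_zero_iff.2 fun k hk => (Gamma_pos_of_pos (by
      have : (1 : ℝ) ≤ k := by exact_mod_cast (mem_Icc.1 hk).1
      linarith)).ne'
  rw [hshift, prod_div_distrib]
  field_simp
end

section
/- For fixed r > 0, the infinite product ∏_{k=1}^∞ Γ(k+1, r²)/Γ(k+1) of regularized upper incomplete Gamma functions converges to a strictly positive limit. -/
/-!
Since `Γ(a) - Γ(a,x) = ∫₀ˣ t^(a-1) e^(-t) dt ≤ x^a / a`, the `k`-th factor lies in `(0,1]` and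
differs from `1` by at most `x^(k+1) / (k+1)!`, a summable sequence. The logarithms of the factors
are then summable too, and the product converges to the exponential of their sum.
-/

open MeasureTheory Real Filter Finset Topology Asymptotics

open scoped Nat

theorem Real.exists_pos_hasProd_of_summable_one_sub {ι : Type*} {g : ι → ℝ}
    (hpos : ∀ i, 0 < g i) (hsum : Summable fun i => 1 - g i) :
    ∃ P : ℝ, 0 < P ∧ HasProd g P := by
  have hlog : Summable fun i => log (g i) := by
    simpa using Real.summable_log_one_add_of_summable hsum.neg
  exact ⟨_, exp_pos _, Real.hasProd_of_hasSum_log hpos hlog.hasSum⟩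

section IncompleteGamma

variable {a x : ℝ}

theorem integrableOn_rpow_mul_exp_neg_Ioi (ha : 0 < a) :
    IntegrableOn (fun t : ℝ => t ^ (a - 1) * exp (-t)) (Set.Ioi 0) := by
  simpa only [mul_comm] using Real.GammaIntegral_convergent ha

theorem Gamma_eq_integral_Ioc_add_uGamma (ha : 0 < a) (hx : 0 ≤ x) :
    Gamma a = (∫ t in Set.Ioc 0 x, t ^ (a - 1) * exp (-t)) + uGamma a x := by
  have hint := integrableOn_rpow_mul_exp_neg_Ioi ha
  rw [Gamma_eq_integral ha, uGamma, ← Set.Ioc_union_Ioi_eq_Ioi hx,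
    ← setIntegral_union (Set.Ioc_disjoint_Ioi le_rfl) measurableSet_Ioi
      (hint.mono_set Set.Ioc_subset_Ioi_self) (hint.mono_set (Set.Ioi_subset_Ioi hx))]
  simp only [mul_comm]

theorem uGamma_pos (ha : 0 < a) (hx : 0 ≤ x) : 0 < uGamma a x := by
  have hpos : ∀ t ∈ Set.Ioi x, 0 < t ^ (a - 1) * exp (-t) := fun t ht =>
    mul_pos (rpow_pos_of_pos (hx.trans_lt ht) _) (exp_pos _)
  have hint := (integrableOn_rpow_mul_exp_neg_Ioi ha).mono_set (Set.Ioi_subset_Ioi hx)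
  rw [uGamma, setIntegral_pos_iff_support_of_nonneg_ae
    (ae_restrict_of_forall_mem measurableSet_Ioi fun t ht => (hpos t ht).le) hint]
  exact lt_of_lt_of_le (by simp) (measure_mono fun t ht => ⟨(hpos t ht).ne', ht⟩)

theorem uGamma_le_Gamma (ha : 0 < a) (hx : 0 ≤ x) : uGamma a x ≤ Gamma a := by
  rw [Gamma_eq_integral_Ioc_add_uGamma ha hx, le_add_iff_nonneg_left]
  refine setIntegral_nonneg measurableSet_Ioc fun t ht => ?_
  have := ht.1.le
  positivity

theorem Gamma_sub_uGamma_le (ha : 0 < a) (hx : 0 ≤ x) : Gamma a - uGamma a x ≤ x ^ a / a := by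
  have hint := integrableOn_rpow_mul_exp_neg_Ioi ha
  have hpow : ∫ t in Set.Ioc 0 x, t ^ (a - 1) = x ^ a / a := by
    rw [← intervalIntegral.integral_of_le hx, integral_rpow (Or.inl (by linarith))]
    simp [ha.ne']
  rw [Gamma_eq_integral_Ioc_add_uGamma ha hx, add_sub_cancel_right, ← hpow]
  refine setIntegral_mono_on (hint.mono_set Set.Ioc_subset_Ioi_self)
    (intervalIntegral.intervalIntegrable_rpow' (by linarith)).1 measurableSet_Ioc fun t ht =>
      mul_le_of_le_one_right (rpow_nonneg ht.1.le _) (exp_le_one_iff.mpr (by linarith [ht.1]))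

theorem one_sub_uGamma_div_Gamma_le (ha : 0 < a) (hx : 0 ≤ x) :
    1 - uGamma a x / Gamma a ≤ x ^ a / Gamma (a + 1) := by
  have hΓ := Gamma_pos_of_pos ha
  rw [Gamma_add_one ha.ne', one_sub_div hΓ.ne', ← div_div, div_le_div_iff_of_pos_right hΓ]
  exact Gamma_sub_uGamma_le ha hx

theorem one_sub_uGamma_div_Gamma_natCast_le (n : ℕ) (hx : 0 ≤ x) :
    1 - uGamma (n + 1) x / Gamma (n + 1) ≤ x ^ (n + 1) / (n + 1)! := by
  have h := one_sub_uGamma_div_Gamma_le (a := ((n + 1 : ℕ) : ℝ)) (by positivity) hx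
  rw [rpow_natCast, Gamma_nat_eq_factorial] at h
  exact_mod_cast h

end IncompleteGamma

theorem regularized_uGamma_infinite_product_pos_general (r : ℝ) :
    ∃ P : ℝ, 0 < P ∧
      Filter.Tendsto
        (fun N : ℕ => ∏ k ∈ Finset.Icc 1 N, uGamma ((k : ℝ) + 1) (r ^ 2) /
          Real.Gamma ((k : ℝ) + 1)) Filter.atTop (nhds P) := by
  have hx : 0 ≤ r ^ 2 := sq_nonneg r
  set f : ℕ → ℝ := fun k => uGamma ((k : ℝ) + 1) (r ^ 2) / Gamma ((k : ℝ) + 1)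
  have hpos : ∀ k, 0 < f (k + 1) := fun k =>
    div_pos (uGamma_pos (by positivity) hx) (Gamma_pos_of_pos (by positivity))
  have hle_one : ∀ k, f (k + 1) ≤ 1 := fun k =>
    (div_le_one (Gamma_pos_of_pos (by positivity))).2 (uGamma_le_Gamma (by positivity) hx)
  have hsum : Summable fun k => 1 - f (k + 1) :=
    Summable.of_nonneg_of_le (fun k => sub_nonneg.2 (hle_one k))
      (fun k => one_sub_uGamma_div_Gamma_natCast_le (k + 1) hx)
      ((summable_nat_add_iff 2).mpr (Real.summable_pow_div_factorial (r ^ 2)))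
  obtain ⟨P, hP, hprod⟩ := Real.exists_pos_hasProd_of_summable_one_sub hpos hsum
  refine ⟨P, hP, ?_⟩
  convert hprod.tendsto_prod_nat using 2 with N
  rw [← Finset.Ico_add_one_right_eq_Icc, Finset.prod_Ico_eq_prod_range]
  simp [f, add_comm]

/-- For fixed `r > 0`, the infinite product `∏_{k=1}^∞ Γ(k+1, r²)/Γ(k+1)` of regularized
upper incomplete Gamma functions converges to a strictly positive limit. -/
theorem regularized_uGamma_infinite_product_pos (r : ℝ) (hr : 0 < r) :
    ∃ P : ℝ, 0 < P ∧
      Filter.Tendsto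
        (fun N : ℕ => ∏ k ∈ Finset.Icc 1 N, uGamma ((k : ℝ) + 1) (r ^ 2) /
          Real.Gamma ((k : ℝ) + 1)) Filter.atTop (nhds P) :=
  regularized_uGamma_infinite_product_pos_general r
end

section
/- For the complex Ginibre ensemble, the scaled minimum modulus satisfies a large deviation principle at speed N²/4 with rate function I(z) = z⁴: for fixed 0 < |λ| ≤ 1, lim_{N→∞} −(4/N²) log P(r_min^{(N)}(A)/√N ≥ |λ|) = |λ|⁴. -/
/-!
Writing `eₖ(x) = ∑_{j ≤ k} xʲ/j!`, one has `Γ(k+1, x)/Γ(k+1) = e^{-x} eₖ(x)`, so the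
log-probability equals `-N x + ∑_{k<N} log eₖ(x)` with `x = N c²`. For `k ≥ x` the sum `eₖ(x)` lies
between its `⌊x⌋`-th term and `eˣ`, so `log eₖ(x) = x + O(log x)`; for `k < x` it lies between
its last term `xᵏ/k!` and `k + 1` times that term. Stirling's bounds on `log k!` and the comparison
of `∑ k log k` with `∫ t log t` then give `∑_{k<N} log eₖ(x) = N x - x²/4 + O(N log N)`, whence
`-(4/N²) log P → 4c² - 4(c² - c⁴/4) = c⁴`.
-/

open MeasureTheory Real Filter Finset Topology Asymptotics

open scoped Nat

noncomputable def expPartialSum (k : ℕ) (x : ℝ) : ℝ := ∑ j ∈ range (k + 1), x ^ j / j !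

theorem expPartialSum_succ (k : ℕ) (x : ℝ) :
    expPartialSum (k + 1) x = expPartialSum k x + x ^ (k + 1) / (k + 1)! :=
  sum_range_succ _ _

theorem hasDerivAt_expPartialSum (k : ℕ) (x : ℝ) :
    HasDerivAt (expPartialSum k) (expPartialSum k x - x ^ k / k !) x := by
  induction k with
  | zero =>
    have : expPartialSum 0 = fun _ => 1 := funext fun x => by simp [expPartialSum]
    simpa [this] using hasDerivAt_const x (1 : ℝ)
  | succ k ih =>
    rw [show expPartialSum (k + 1) = fun x => expPartialSum k x + x ^ (k + 1) / (k + 1)! from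
      funext (expPartialSum_succ k)]
    refine (ih.add ((hasDerivAt_pow (k + 1) x).div_const ((k + 1)! : ℝ))).congr_deriv ?_
    simp only [Nat.add_sub_cancel, Nat.factorial_succ, Nat.cast_mul, Nat.cast_succ]
    field_simp
    ring

theorem tendsto_exp_neg_mul_expPartialSum (k : ℕ) :
    Tendsto (fun t => exp (-t) * expPartialSum k t) atTop (𝓝 0) := by
  have := tendsto_finsetSum (range (k + 1)) fun j (_ : j ∈ range (k + 1)) =>
    (tendsto_pow_mul_exp_neg_atTop_nhds_zero j).div_const (j ! : ℝ)
  simp only [zero_div, sum_const_zero] at this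
  refine this.congr fun t => ?_
  rw [expPartialSum, mul_sum]
  exact sum_congr rfl fun j _ => by ring

theorem integral_Ioi_pow_mul_exp_neg_div_factorial (k : ℕ) {x : ℝ} (hx : 0 ≤ x) :
    ∫ t in Set.Ioi x, t ^ k * exp (-t) / k ! = exp (-x) * expPartialSum k x := by
  have hderiv (t : ℝ) : HasDerivAt (fun t => -(exp (-t) * expPartialSum k t))
      (t ^ k * exp (-t) / k !) t :=
    (((hasDerivAt_neg t).exp).mul (hasDerivAt_expPartialSum k t)).neg.congr_deriv (by ring)
  rw [integral_Ioi_of_hasDerivAt_of_nonneg' (fun t _ => hderiv t)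
    (fun t ht => by have : 0 ≤ t := hx.trans (le_of_lt ht); positivity)
    (tendsto_exp_neg_mul_expPartialSum k).neg]
  ring

theorem uGamma_natCast_add_one_div_Gamma (k : ℕ) {x : ℝ} (hx : 0 ≤ x) :
    uGamma (k + 1) x / Gamma (k + 1) = exp (-x) * expPartialSum k x := by
  simp_rw [uGamma, add_sub_cancel_right, rpow_natCast, Gamma_nat_eq_factorial, ← integral_div]
  exact integral_Ioi_pow_mul_exp_neg_div_factorial k hx

section expPartialSum

variable {x : ℝ}

theorem pow_div_factorial_le_expPartialSum (hx : 0 ≤ x) {j k : ℕ} (hjk : j ≤ k) :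
    x ^ j / j ! ≤ expPartialSum k x :=
  single_le_sum (f := fun i => x ^ i / i !) (fun _ _ => by positivity)
    (mem_range.2 (Nat.lt_succ_of_le hjk))

theorem expPartialSum_pos (hx : 0 ≤ x) (k : ℕ) : 0 < expPartialSum k x :=
  one_pos.trans_le (by simpa using pow_div_factorial_le_expPartialSum hx (Nat.zero_le k))

theorem expPartialSum_le_exp (hx : 0 ≤ x) (k : ℕ) : expPartialSum k x ≤ exp x :=
  sum_le_exp_of_nonneg hx (k + 1)

theorem pow_div_factorial_le_pow_div_factorial {j k : ℕ} (hjk : j ≤ k) (hkx : k ≤ x) :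
    x ^ j / j ! ≤ x ^ k / k ! := by
  have hx : 0 ≤ x := (Nat.cast_nonneg k).trans hkx
  have hfact : (k ! : ℝ) ≤ j ! * x ^ (k - j) := by
    have h := Nat.factorial_mul_descFactorial (Nat.sub_le k j)
    rw [Nat.sub_sub_self hjk] at h
    rw [← h, Nat.cast_mul]
    gcongr
    calc ((k.descFactorial (k - j) : ℕ) : ℝ) ≤ (k : ℝ) ^ (k - j) := by
          exact_mod_cast Nat.descFactorial_le_pow k (k - j)
      _ ≤ x ^ (k - j) := pow_le_pow_left₀ (Nat.cast_nonneg k) hkx _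
  rw [div_le_div_iff₀ (by positivity) (by positivity), ← pow_mul_pow_sub x hjk]
  calc x ^ j * k ! ≤ x ^ j * (j ! * x ^ (k - j)) := by gcongr
    _ = _ := by ring

theorem expPartialSum_le_of_le {k : ℕ} (hkx : k ≤ x) :
    expPartialSum k x ≤ (k + 1) * (x ^ k / k !) := by
  have := sum_le_card_nsmul (range (k + 1)) (fun j => x ^ j / j !) (x ^ k / k !)
    fun j hj => pow_div_factorial_le_pow_div_factorial (Nat.lt_succ_iff.1 (mem_range.1 hj)) hkx
  simpa [expPartialSum, card_range, nsmul_eq_mul] using this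

theorem log_pow_div_factorial (hx : 0 < x) (k : ℕ) : log (x ^ k / k !) = k * log x - log k ! := by
  rw [log_div (by positivity) (by positivity), log_pow]

theorem log_pow_div_factorial_le_log_expPartialSum (hx : 0 < x) {j k : ℕ} (hjk : j ≤ k) :
    log (x ^ j / j !) ≤ log (expPartialSum k x) :=
  log_le_log (by positivity) (pow_div_factorial_le_expPartialSum hx.le hjk)

theorem log_expPartialSum_le (hx : 0 ≤ x) (k : ℕ) : log (expPartialSum k x) ≤ x :=
  (log_le_log (expPartialSum_pos hx k) (expPartialSum_le_exp hx k)).trans_eq (log_exp x)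

theorem log_expPartialSum_le_of_le (hx : 0 < x) {k : ℕ} (hkx : k ≤ x) :
    log (expPartialSum k x) ≤ log (x ^ k / k !) + log (k + 1) := by
  rw [add_comm, ← log_mul (by positivity) (by positivity)]
  exact log_le_log (expPartialSum_pos hx.le k) (expPartialSum_le_of_le hkx)

end expPartialSum

theorem log_factorial_le (n : ℕ) : log n ! ≤ n * log n - n + 1 + log n / 2 := by
  rcases n.eq_zero_or_pos with rfl | hn
  · simp
  obtain ⟨m, rfl⟩ := Nat.exists_eq_add_of_le' hn
  have h := Stirling.log_stirlingSeq'_antitone (Nat.zero_le m)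
  simp only [Function.comp_apply, Stirling.stirlingSeq_one] at h
  rw [Stirling.log_stirlingSeq_formula, log_div (exp_pos 1).ne' (by positivity), log_exp, log_sqrt
    (by norm_num), log_mul (by norm_num) (by positivity), log_div (by positivity) (exp_pos 1).ne',
    log_exp] at h
  linarith

theorem natCast_mul_log_sub_le_log_factorial (n : ℕ) : n * log n - n ≤ log n ! := by
  rcases eq_or_ne n 0 with rfl | hn
  · simp
  have h := Stirling.le_log_factorial_stirling hn
  have : 0 ≤ log n := log_natCast_nonneg n
  have : 0 ≤ log (2 * π) := log_nonneg (by linarith [pi_gt_three])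
  linarith

theorem integral_from_one_mul_log {b : ℝ} (hb : 1 ≤ b) :
    ∫ t in (1 : ℝ)..b, t * log t = b ^ 2 / 2 * log b - b ^ 2 / 4 + 1 / 4 := by
  have hderiv (t : ℝ) (ht : t ∈ Set.uIcc 1 b) :
      HasDerivAt (fun t => t ^ 2 / 2 * log t - t ^ 2 / 4) (t * log t) t := by
    have ht0 : t ≠ 0 := by
      rw [Set.uIcc_of_le hb] at ht; linarith [ht.1]
    refine ((((hasDerivAt_pow 2 t).div_const 2).mul (hasDerivAt_log ht0)).sub
      ((hasDerivAt_pow 2 t).div_const 4)).congr_deriv ?_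
    field_simp
    ring
  have hcont : ContinuousOn (fun t => t * log t) (Set.uIcc 1 b) :=
    continuousOn_id.mul (continuousOn_log.mono fun t ht => by
      rw [Set.uIcc_of_le hb] at ht; exact ne_of_gt (by linarith [ht.1]))
  rw [intervalIntegral.integral_eq_sub_of_hasDerivAt hderiv hcont.intervalIntegrable]
  simp

theorem monotoneOn_mul_log : MonotoneOn (fun t : ℝ => t * log t) (Set.Ici 1) :=
  fun a ha b _ hab => mul_le_mul hab (log_le_log (by linarith [Set.mem_Ici.1 ha]) hab)
    (log_nonneg ha) (by linarith [Set.mem_Ici.1 ha])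

theorem sum_range_mul_log_le {m : ℕ} (hm : 1 ≤ m) :
    ∑ k ∈ range m, k * log k ≤ (m : ℝ) ^ 2 / 2 * log m - (m : ℝ) ^ 2 / 4 + 1 / 4 := by
  have h := (monotoneOn_mul_log.mono fun _ ht => by exact_mod_cast ht.1).sum_le_integral_Ico hm
  rw [Nat.cast_one, integral_from_one_mul_log (by exact_mod_cast hm)] at h
  simpa [sum_range_eq_add_Ico _ hm] using h

theorem le_sum_range_mul_log {m : ℕ} (hm : 1 ≤ m) :
    (m : ℝ) ^ 2 / 2 * log m - (m : ℝ) ^ 2 / 4 + 1 / 4 - m * log m ≤ ∑ k ∈ range m, k * log k := by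
  have h := (monotoneOn_mul_log.mono fun _ ht => by exact_mod_cast ht.1).integral_le_sum_Ico hm
  rw [Nat.cast_one, integral_from_one_mul_log (by exact_mod_cast hm)] at h
  have hshift := sum_range_eq_add_Ico (fun i : ℕ => ((i + 1 : ℕ) : ℝ) * log (i + 1 : ℕ)) hm
  have hsucc' := sum_range_succ' (fun i : ℕ => (i : ℝ) * log i) m
  have hsucc := sum_range_succ (fun i : ℕ => (i : ℝ) * log i) m
  simp only [zero_add, Nat.cast_one, log_one, mul_zero, Nat.cast_zero, zero_mul, add_zero]
    at hshift hsucc'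
  linarith

theorem sum_range_natCast (n : ℕ) : ∑ k ∈ range n, (k : ℝ) = n * (n - 1) / 2 := by
  induction n with
  | zero => simp
  | succ n ih =>
    rw [sum_range_succ, ih]
    push_cast
    ring

/- By Stirling the summand is `k log (x/k) + k + O(log x)`, and
`∫₀ˣ (t log (x/t) + t) dt = 3x²/4 = ⌊x⌋ x - x²/4 + O(x)`. -/
theorem abs_sum_range_floor_log_pow_div_factorial_sub_le {x : ℝ} (hx : 1 ≤ x) :
    |∑ k ∈ range ⌊x⌋₊, log (x ^ k / k !) - (⌊x⌋₊ * x - x ^ 2 / 4)| ≤ 3 * ⌊x⌋₊ * (1 + log x) := by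
  simp_rw [log_pow_div_factorial (by linarith : 0 < x)]
  set m := ⌊x⌋₊
  have hmx : (m : ℝ) ≤ x := Nat.floor_le (by linarith)
  have hxm : x < m + 1 := Nat.lt_floor_add_one x
  have hm : 1 ≤ m := (Nat.one_le_floor_iff x).2 hx
  have hm' : (1 : ℝ) ≤ m := by exact_mod_cast hm
  have hlog : log m ≤ log x := log_le_log (by linarith) hmx
  have hfact_lo : ∑ k ∈ range m, ((k : ℝ) * log k - k) ≤ ∑ k ∈ range m, log (k ! : ℝ) :=
    sum_le_sum fun k _ => natCast_mul_log_sub_le_log_factorial k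
  have hfact_hi :
      ∑ k ∈ range m, log (k ! : ℝ) ≤ ∑ k ∈ range m, ((k : ℝ) * log k - k + 1 + log x / 2) := by
    refine sum_le_sum fun k hk => (log_factorial_le k).trans ?_
    rcases k.eq_zero_or_pos with rfl | hk0
    · simpa using div_nonneg (log_nonneg hx) zero_le_two
    have : (k : ℝ) ≤ x := hmx.trans' (by exact_mod_cast (mem_range.1 hk).le)
    have := log_le_log (by exact_mod_cast hk0) this
    linarith
  simp only [sum_sub_distrib, sum_add_distrib, sum_const, card_range, nsmul_eq_mul,
    sum_range_natCast] at hfact_lo hfact_hi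
  have hS_lo := le_sum_range_mul_log hm
  have hS_hi := sum_range_mul_log_le hm
  have hgap_nonneg : 0 ≤ (m : ℝ) ^ 2 * (log x - log m) := mul_nonneg (by positivity) (by linarith)
  have hgap_le : (m : ℝ) ^ 2 * (log x - log m) ≤ m := by
    have hdiv := log_le_sub_one_of_pos (div_pos (by linarith) (by linarith) : 0 < x / m)
    rw [log_div (by linarith) (by linarith)] at hdiv
    have : (m : ℝ) ^ 2 * (x / m - 1) = m * (x - m) := by field_simp
    nlinarith
  have hquad_nonneg : 0 ≤ (x - m) * (3 * m - x) := mul_nonneg (by linarith) (by linarith)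
  have hquad_le : (x - m) * (3 * m - x) ≤ 2 * m := by nlinarith
  have hmul_log : (m : ℝ) * log m ≤ m * log x := mul_le_mul_of_nonneg_left hlog (by positivity)
  rw [sum_sub_distrib, ← sum_mul, sum_range_natCast, abs_le]
  constructor <;> linarith

theorem sub_two_sub_log_le_log_expPartialSum {x : ℝ} (hx : 1 ≤ x) {k : ℕ} (hk : ⌊x⌋₊ ≤ k) :
    x - 2 - log x ≤ log (expPartialSum k x) := by
  set m := ⌊x⌋₊
  have hmx : (m : ℝ) ≤ x := Nat.floor_le (by linarith)
  have hxm : x < m + 1 := Nat.lt_floor_add_one x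
  have hm : (1 : ℝ) ≤ m := by exact_mod_cast (Nat.one_le_floor_iff x).2 hx
  have hlog : log m ≤ log x := log_le_log (by linarith) hmx
  have hlog0 : 0 ≤ log m := log_nonneg hm
  have := log_pow_div_factorial_le_log_expPartialSum (x := x) (by linarith) hk
  rw [log_pow_div_factorial (by linarith)] at this
  have := log_factorial_le m
  have := mul_le_mul_of_nonneg_left hlog (by linarith : (0 : ℝ) ≤ m)
  linarith

theorem abs_sum_range_log_expPartialSum_sub_le {x : ℝ} (hx : 1 ≤ x) {N : ℕ} (hxN : x ≤ N) :
    |∑ k ∈ range N, log (expPartialSum k x) - (N * x - x ^ 2 / 4)| ≤ 4 * N * (1 + log N) := by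
  set m := ⌊x⌋₊
  have hmx : (m : ℝ) ≤ x := Nat.floor_le (by linarith)
  have hmN : m ≤ N := Nat.floor_le_of_le hxN
  have hlogx : 0 ≤ log x := log_nonneg hx
  have hlogN : log x ≤ log N := log_le_log (by linarith) hxN
  have hhead_lo : ∑ k ∈ range m, log (x ^ k / k !) ≤ ∑ k ∈ range m, log (expPartialSum k x) :=
    sum_le_sum fun k _ => log_pow_div_factorial_le_log_expPartialSum (by linarith) le_rfl
  have hhead_hi : ∑ k ∈ range m, log (expPartialSum k x)
      ≤ ∑ k ∈ range m, log (x ^ k / k !) + m * log x := by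
    have hterm (k : ℕ) (hk : k ∈ range m) :
        log (expPartialSum k x) ≤ log (x ^ k / k !) + log x := by
      have hsucc : (k : ℝ) + 1 ≤ x :=
        hmx.trans' (by exact_mod_cast Nat.succ_le_of_lt (mem_range.1 hk))
      have := log_expPartialSum_le_of_le (x := x) (k := k) (by linarith) (by linarith)
      have := log_le_log (by positivity) hsucc
      linarith
    simpa [sum_add_distrib] using sum_le_sum hterm
  have htail_lo : (N - m) * (x - 2 - log x) ≤ ∑ k ∈ Ico m N, log (expPartialSum k x) := by
    have := card_nsmul_le_sum (Ico m N) _ _ fun k hk =>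
      sub_two_sub_log_le_log_expPartialSum hx (mem_Ico.1 hk).1
    rwa [nsmul_eq_mul, Nat.card_Ico, Nat.cast_sub hmN] at this
  have htail_hi : ∑ k ∈ Ico m N, log (expPartialSum k x) ≤ (N - m) * x := by
    have := sum_le_card_nsmul (Ico m N) _ _ fun k _ => log_expPartialSum_le (x := x) (by linarith) k
    rwa [nsmul_eq_mul, Nat.card_Ico, Nat.cast_sub hmN] at this
  have hhead := abs_le.1 (abs_sum_range_floor_log_pow_div_factorial_sub_le hx)
  have hmN' : (m : ℝ) ≤ N := by exact_mod_cast hmN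
  have hmL : m * log x ≤ N * log N := mul_le_mul hmN' hlogN hlogx (Nat.cast_nonneg N)
  have hNL : N * log x ≤ N * log N := mul_le_mul_of_nonneg_left hlogN (Nat.cast_nonneg N)
  rw [← sum_range_add_sum_Ico _ hmN, abs_le]
  constructor <;> linarith

theorem log_prod_uGamma_div_Gamma {x : ℝ} (hx : 0 ≤ x) (N : ℕ) :
    log (∏ k ∈ range N, uGamma (k + 1) x / Gamma (k + 1))
      = -(N * x) + ∑ k ∈ range N, log (expPartialSum k x) := by
  simp_rw [uGamma_natCast_add_one_div_Gamma _ hx]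
  rw [log_prod fun k _ => (mul_pos (exp_pos _) (expPartialSum_pos hx k)).ne']
  simp_rw [log_mul (exp_pos _).ne' (expPartialSum_pos hx _).ne', log_exp, sum_add_distrib,
    sum_const, card_range, nsmul_eq_mul]
  ring

theorem tendsto_one_add_log_div_natCast : Tendsto (fun N : ℕ => (1 + log N) / N) atTop (𝓝 0) := by
  have hlog : Tendsto (fun N : ℕ => log N / N) atTop (𝓝 0) :=
    isLittleO_log_id_atTop.tendsto_div_nhds_zero.comp tendsto_natCast_atTop_atTop
  simpa [add_div] using tendsto_one_div_atTop_nhds_zero_nat.add hlog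

theorem tendsto_sum_range_log_expPartialSum_div_sq {c : ℝ} (hc0 : 0 < c) (hc1 : c ≤ 1) :
    Tendsto (fun N : ℕ => (∑ k ∈ range N, log (expPartialSum k (N * c ^ 2))) / N ^ 2) atTop
      (𝓝 (c ^ 2 - c ^ 4 / 4)) := by
  rw [tendsto_iff_norm_sub_tendsto_zero]
  refine squeeze_zero' (Eventually.of_forall fun _ => norm_nonneg _)
    ?_ (by simpa using tendsto_one_add_log_div_natCast.const_mul 4)
  have hx_large :=
    (tendsto_natCast_atTop_atTop.atTop_mul_const (pow_pos hc0 2)).eventually_ge_atTop 1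
  filter_upwards [hx_large, eventually_ge_atTop 1] with N hx hN
  have hN0 : (0 : ℝ) < N := by exact_mod_cast hN
  have hxN : (N : ℝ) * c ^ 2 ≤ N := mul_le_of_le_one_right hN0.le (pow_le_one₀ hc0.le hc1)
  rw [Real.norm_eq_abs, show ∀ T : ℝ, T / N ^ 2 - (c ^ 2 - c ^ 4 / 4)
      = (T - (N * (N * c ^ 2) - (N * c ^ 2) ^ 2 / 4)) / N ^ 2 from fun T => by field_simp,
    abs_div, abs_of_pos (by positivity : (0 : ℝ) < N ^ 2), div_le_iff₀ (by positivity)]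
  calc _ ≤ 4 * N * (1 + log N) := abs_sum_range_log_expPartialSum_sub_le hx hxN
    _ = _ := by field_simp

/-- Large-deviation principle for the scaled minimum modulus of the complex Ginibre ensemble:
for fixed `0 < c ≤ 1`, with `P(r_min^{(N)} ≥ √N c) = ∏_{k=0}^{N-1} Γ(k+1, N c²)/Γ(k+1)`,
one has `lim_{N→∞} -(4/N²) log P(r_min^{(N)}/√N ≥ c) = c⁴` (speed `N²/4`, rate `I(z)=z⁴`). -/
theorem ginibre_scaled_min_modulus_ldp (c : ℝ) (hc0 : 0 < c) (hc1 : c ≤ 1) :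
    Filter.Tendsto
      (fun N : ℕ =>
        -(4 / (N : ℝ) ^ 2) *
          Real.log (∏ k ∈ Finset.range N,
            uGamma ((k : ℝ) + 1) ((Real.sqrt N * c) ^ 2) / Real.Gamma ((k : ℝ) + 1)))
      Filter.atTop (nhds (c ^ 4)) := by
  have h := (tendsto_sum_range_log_expPartialSum_div_sq hc0 hc1).const_mul 4
  rw [show c ^ 4 = 4 * c ^ 2 - 4 * (c ^ 2 - c ^ 4 / 4) by ring]
  refine (tendsto_const_nhds.sub h).congr' ?_
  filter_upwards [eventually_ne_atTop 0] with N hN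
  rw [mul_pow, sq_sqrt (Nat.cast_nonneg N), log_prod_uGamma_div_Gamma (by positivity)]
  field_simp
  ring
end
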